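/- For n ≥ 1, let P_n and Q_n be the Legendre functions of the first and second kind. Then as L → 1⁺, (P_n Q_n)'(L) = 1/(2(1−L)) + O(|log(L−1)|); consequently the quantity λ_{0,n}(L) := −(1/2)(L²−1)(P_n Q_n)'(L) tends to 1/2 as L → 1⁺. -/

import Mathlib

open Filter

/-- The Legendre polynomial `P_n`, via the Rodrigues formula. -/
noncomputable def legendreP (n : ℕ) (z : ℝ) : ℝ :=
  (1 / (2 ^ n * (n.factorial : ℝ))) * iteratedDeriv n (fun w : ℝ => (w ^ 2 - 1) ^ n) z

/-- The Legendre function of the second kind `Q_n` (for `z > 1`). -/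
noncomputable def legendreQ (n : ℕ) (z : ℝ) : ℝ :=
  (1 / 2) * legendreP n z * Real.log ((z + 1) / (z - 1)) -
    ∑ m ∈ Finset.Icc 1 n, (1 / (m : ℝ)) * legendreP (m - 1) z * legendreP (n - m) z

/-!
Write `Q_n = ½ P_n log((z+1)/(z-1)) - W` with a polynomial `W`. By the product rule,
`(P_n Q_n)' = P_n P_n' log((L+1)/(L-1)) + ½ P_n² (1/(L+1) - 1/(L-1)) - (P_n W)'`.
Since `P_n(1) = 1`, the singular term `-P_n(L)²/(2(L-1))` is `1/(2(1-L))` minus half the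
difference quotient of `P_n²` at `1`, which converges; apart from `-P_n P_n' log(L-1)` every
other term is continuous at `1`. Multiplying by `-(L²-1)/2` turns the `O(log(L-1))` remainder into
`O((L-1) log(L-1)) → 0`.
-/

open Topology Asymptotics Polynomial

theorem Polynomial.iteratedDeriv_eval (p : ℝ[X]) (k : ℕ) :
    iteratedDeriv k (fun x => p.eval x) = fun x => (derivative^[k] p).eval x := by
  induction k generalizing p with
  | zero => simp
  | succ k ih =>
    rw [iteratedDeriv_succ', Function.iterate_succ_apply, ← ih]
    congr 1
    ext x
    exact p.deriv

theorem Polynomial.eval_iterate_derivative_X_sub_pow_mul {R : Type*} [CommRing R]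
    (n : ℕ) (a : R) (q : R[X]) :
    (derivative^[n] ((X - C a) ^ n * q)).eval a = n.factorial * q.eval a := by
  rw [iterate_derivative_mul, eval_finsetSum, Finset.sum_eq_single 0]
  · simp [iterate_derivative_X_sub_pow_self]
  · intro k hk hk0
    rw [iterate_derivative_X_sub_pow, Nat.sub_sub_self (Finset.mem_range_succ_iff.mp hk)]
    simp [hk0]
  · simp

noncomputable def legendrePoly (n : ℕ) : ℝ[X] :=
  C (1 / (2 ^ n * (n.factorial : ℝ))) * derivative^[n] ((X ^ 2 - 1) ^ n)

theorem legendreP_eq_eval (n : ℕ) : legendreP n = fun z => (legendrePoly n).eval z := by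
  have h : (fun w : ℝ => (w ^ 2 - 1) ^ n) = fun w => (((X : ℝ[X]) ^ 2 - 1) ^ n).eval w := by
    simp
  funext z
  simp [legendreP, legendrePoly, h, iteratedDeriv_eval]

theorem legendrePoly_eval_one (n : ℕ) : (legendrePoly n).eval 1 = 1 := by
  have hfactor : ((X : ℝ[X]) ^ 2 - 1) ^ n = (X - C 1) ^ n * (X + 1) ^ n := by
    rw [← mul_pow]; congr 1; simp only [map_one]; ring
  rw [legendrePoly, eval_mul, hfactor, eval_iterate_derivative_X_sub_pow_mul]
  simp only [eval_C, eval_pow, eval_add, eval_X, eval_one]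
  field_simp
  norm_num

noncomputable def legendreQPolyPart (n : ℕ) : ℝ[X] :=
  ∑ m ∈ Finset.Icc 1 n, C (1 / (m : ℝ)) * legendrePoly (m - 1) * legendrePoly (n - m)

theorem legendreP_mul_legendreQ_eq (n : ℕ) :
    (fun z => legendreP n z * legendreQ n z) = fun z => (legendrePoly n).eval z *
      (1 / 2 * (legendrePoly n).eval z * Real.log ((z + 1) / (z - 1)) -
        (legendreQPolyPart n).eval z) := by
  simp [legendreQ, legendreP_eq_eval, legendreQPolyPart, eval_finsetSum]

theorem hasDerivAt_log_div {L : ℝ} (hL : 1 < L) :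
    HasDerivAt (fun z => Real.log ((z + 1) / (z - 1))) (1 / (L + 1) - 1 / (L - 1)) L := by
  have hL₁ : L + 1 ≠ 0 := by linarith
  have hL₂ : L - 1 ≠ 0 := by linarith
  have h := (((hasDerivAt_id' L).add_const 1).fun_div ((hasDerivAt_id' L).sub_const 1) hL₂).log
    (div_ne_zero hL₁ hL₂)
  convert h using 1
  field_simp

theorem tendsto_sub_nhdsGT (a : ℝ) : Tendsto (fun x => x - a) (𝓝[>] a) (𝓝[>] 0) := by
  refine tendsto_nhdsWithin_iff.2 ⟨?_, ?_⟩
  · exact ((continuous_sub_right a).tendsto' a 0 (sub_self a)).mono_left nhdsWithin_le_nhds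
  · filter_upwards [self_mem_nhdsWithin] with x (hx : a < x) using sub_pos.2 hx

theorem isBigO_log_sub_one_of_tendsto {G c : ℝ → ℝ} {a b : ℝ} (hG : Tendsto G (𝓝[>] 1) (𝓝 a))
    (hc : Tendsto c (𝓝[>] 1) (𝓝 b)) :
    (fun L => G L + c L * Real.log (L - 1)) =O[𝓝[>] 1] fun L => Real.log (L - 1) := by
  have hlog : Tendsto (fun L => Real.log (L - 1)) (𝓝[>] 1) atBot :=
    Real.tendsto_log_nhdsGT_zero.comp (tendsto_sub_nhdsGT 1)
  have hone : (fun _ => (1 : ℝ)) =O[𝓝[>] 1] fun L => Real.log (L - 1) :=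
    (isLittleO_const_left.2 <| Or.inr <| tendsto_abs_atBot_atTop.comp hlog).isBigO
  refine (hG.isBigO_one ℝ).trans hone |>.add ?_
  simpa using (hc.isBigO_one ℝ).mul (isBigO_refl (fun L => Real.log (L - 1)) _)

theorem isBigO_deriv_eval_mul_log_div {p s : ℝ[X]} (hp : p.eval 1 = 1) :
    (fun L => deriv (fun z => p.eval z *
        (1 / 2 * p.eval z * Real.log ((z + 1) / (z - 1)) - s.eval z)) L - 1 / (2 * (1 - L)))
      =O[𝓝[>] 1] fun L => Real.log (L - 1) := by
  have hderiv : ∀ L : ℝ, 1 < L → HasDerivAt (fun z => p.eval z *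
      (1 / 2 * p.eval z * Real.log ((z + 1) / (z - 1)) - s.eval z))
      (p.eval L * (derivative p).eval L * Real.log ((L + 1) / (L - 1)) +
        p.eval L ^ 2 / 2 * (1 / (L + 1) - 1 / (L - 1)) -
        ((derivative p).eval L * s.eval L + p.eval L * (derivative s).eval L)) L := by
    intro L hL
    refine ((p.hasDerivAt L).fun_mul ((((p.hasDerivAt L).const_mul (1 / 2)).fun_mul
      (hasDerivAt_log_div hL)).fun_sub (s.hasDerivAt L))).congr_deriv ?_
    ring
  have hslope : Tendsto (slope (fun z => (p ^ 2).eval z) 1) (𝓝[>] 1) (𝓝 _) :=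
    ((p ^ 2).hasDerivAt 1).tendsto_slope.mono_left (nhdsGT_le_nhdsNE 1)
  have hregular : ContinuousAt (fun L => p.eval L * (derivative p).eval L * Real.log (L + 1) +
      p.eval L ^ 2 / (2 * (L + 1)) -
      ((derivative p).eval L * s.eval L + p.eval L * (derivative s).eval L)) 1 := by
    fun_prop (disch := norm_num)
  have hG := (hregular.tendsto.mono_left nhdsWithin_le_nhds).sub (hslope.div_const 2)
  have hc : Tendsto (fun L => -(p.eval L * (derivative p).eval L)) (𝓝[>] 1) (𝓝 _) :=
    (Continuous.tendsto (by fun_prop) 1).mono_left nhdsWithin_le_nhds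
  refine (isBigO_log_sub_one_of_tendsto hG hc).congr' ?_ EventuallyEq.rfl
  filter_upwards [self_mem_nhdsWithin] with L (hL : 1 < L)
  have hL₁ : L + 1 ≠ 0 := by linarith
  have hL₂ : L - 1 ≠ 0 := by linarith
  have hL₃ : 1 - L ≠ 0 := by linarith
  rw [(hderiv L hL).deriv, slope_def_field, Real.log_div hL₁ hL₂]
  simp only [eval_pow, hp]
  field_simp
  ring

theorem exists_pos_bound_of_isBigO_nhdsGT {f g : ℝ → ℝ} {a : ℝ} (h : f =O[𝓝[>] a] g) :
    ∃ C : ℝ, 0 < C ∧ ∃ δ : ℝ, 0 < δ ∧ ∀ x : ℝ, a < x → x < a + δ → |f x| ≤ C * |g x| := by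
  obtain ⟨C, hC, hbound⟩ := h.exists_pos
  obtain ⟨u, hau, hsub⟩ := mem_nhdsGT_iff_exists_Ioo_subset.1 hbound.bound
  exact ⟨C, hC, u - a, sub_pos.2 hau, fun x hax hxu => hsub ⟨hax, by linarith⟩⟩

theorem tendsto_neg_half_mul_sq_sub_one_mul {f : ℝ → ℝ}
    (hf : (fun L => f L - 1 / (2 * (1 - L))) =O[𝓝[>] 1] fun L => Real.log (L - 1)) :
    Tendsto (fun L => -(1 / 2) * (L ^ 2 - 1) * f L) (𝓝[>] 1) (𝓝 (1 / 2)) := by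
  have hmul_log : Tendsto (fun L => (L - 1) * Real.log (L - 1)) (𝓝[>] 1) (𝓝 0) := by
    simpa [Function.comp_def] using (Real.continuous_mul_log.tendsto 0).comp
      ((tendsto_sub_nhdsGT 1).mono_right nhdsWithin_le_nhds)
  have hsmall : Tendsto (fun L => (L - 1) * (f L - 1 / (2 * (1 - L)))) (𝓝[>] 1) (𝓝 0) :=
    ((isBigO_refl (fun L : ℝ => L - 1) _).mul hf).trans_tendsto hmul_log
  have hcoeff : Tendsto (fun L : ℝ => (L + 1) / 2) (𝓝[>] 1) (𝓝 ((1 + 1) / 2)) :=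
    (Continuous.tendsto (f := fun L : ℝ => (L + 1) / 2) (by fun_prop) 1).mono_left
      nhdsWithin_le_nhds
  -- `-(L²-1)/2 · 1/(2(1-L)) = (L+1)/4`
  have hlim := (hcoeff.div_const 2).sub (hcoeff.mul hsmall)
  rw [show (1 + 1 : ℝ) / 2 / 2 - (1 + 1) / 2 * 0 = 1 / 2 by norm_num] at hlim
  refine hlim.congr' ?_
  filter_upwards [self_mem_nhdsWithin] with L (hL : 1 < L)
  have hL₁ : 1 - L ≠ 0 := by linarith
  field_simp
  ring

theorem legendre_derivative_asymptotics_general (n : ℕ) :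
    (∃ C : ℝ, 0 < C ∧ ∃ δ : ℝ, 0 < δ ∧ ∀ L : ℝ, 1 < L → L < 1 + δ →
        |deriv (fun z => legendreP n z * legendreQ n z) L - 1 / (2 * (1 - L))| ≤
          C * |Real.log (L - 1)|) ∧
      Tendsto
        (fun L : ℝ => -(1 / 2) * (L ^ 2 - 1) * deriv (fun z => legendreP n z * legendreQ n z) L)
        (nhdsWithin 1 (Set.Ioi 1)) (nhds (1 / 2)) := by
  have h := isBigO_deriv_eval_mul_log_div (s := legendreQPolyPart n) (legendrePoly_eval_one n)
  rw [← legendreP_mul_legendreQ_eq] at h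
  exact ⟨exists_pos_bound_of_isBigO_nhdsGT h, tendsto_neg_half_mul_sq_sub_one_mul h⟩

/-- as `L → 1⁺`, `(P_n Q_n)'(L) = 1/(2(1-L)) + O(|log(L-1)|)`, and consequently
`λ_{0,n}(L) = -(1/2)(L²-1)(P_n Q_n)'(L) → 1/2`. -/
theorem legendre_derivative_asymptotics (n : ℕ) (hn : 1 ≤ n) :
    (∃ C : ℝ, 0 < C ∧ ∃ δ : ℝ, 0 < δ ∧ ∀ L : ℝ, 1 < L → L < 1 + δ →
        |deriv (fun z => legendreP n z * legendreQ n z) L - 1 / (2 * (1 - L))| ≤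
          C * |Real.log (L - 1)|) ∧
      Tendsto
        (fun L : ℝ => -(1 / 2) * (L ^ 2 - 1) * deriv (fun z => legendreP n z * legendreQ n z) L)
        (nhdsWithin 1 (Set.Ioi 1)) (nhds (1 / 2)) :=
  legendre_derivative_asymptotics_general n
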